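/- If in addition μ = 0, then for all a ∈ ℝ^q and b ∈ ℝ, E|⟨a, W⟩ + b| ≥ min(η/2, 1) · max(‖a‖, |b|). -/

import Mathlib

open MeasureTheory
open scoped RealInnerProductSpace

/-!
Write `I = E|⟨a, W⟩ + b|`. Since `⟨a, W⟩` has mean zero, Jensen gives `|b| ≤ I`; the triangle
inequality and the separation hypothesis applied to `a / ‖a‖` give `η ‖a‖ - |b| ≤ I`.
Averaging the two bounds yields `I ≥ (η / 2) ‖a‖`, and `I ≥ |b|` handles the other term of the max.
-/

lemma min_half_one_mul_max_le {η x y I : ℝ} (hy : 0 ≤ y) (hyI : y ≤ I) (hxI : η * x - y ≤ I) :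
    min (η / 2) 1 * max x y ≤ I := by
  rcases le_total x y with hxy | hyx
  · rw [max_eq_right hxy]
    nlinarith [min_le_right (η / 2) 1]
  · rw [max_eq_left hyx]
    nlinarith [min_le_left (η / 2) 1]

section Integral

variable {Ω : Type*} [MeasurableSpace Ω] {P : Measure Ω} [IsProbabilityMeasure P] {f : Ω → ℝ}

lemma abs_le_integral_abs_add_of_integral_eq_zero (hf : Integrable f P) (hf0 : ∫ ω, f ω ∂P = 0)
    (b : ℝ) : |b| ≤ ∫ ω, |f ω + b| ∂P := by
  have hmean : ∫ ω, (f ω + b) ∂P = b := by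
    simp [integral_add hf (integrable_const b), hf0]
  calc |b| = |∫ ω, (f ω + b) ∂P| := by rw [hmean]
    _ ≤ ∫ ω, |f ω + b| ∂P := abs_integral_le_integral_abs

lemma integral_abs_sub_abs_le_integral_abs_add (hf : Integrable f P) (b : ℝ) :
    ∫ ω, |f ω| ∂P - |b| ≤ ∫ ω, |f ω + b| ∂P := by
  have hfb : Integrable (fun ω => |f ω + b|) P := (hf.add (integrable_const b)).abs
  have hle : ∫ ω, |f ω| ∂P ≤ ∫ ω, (|f ω + b| + |b|) ∂P :=
    integral_mono hf.abs (hfb.add (integrable_const _)) fun ω => by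
      simpa using abs_sub_le (f ω + b) 0 b
  rw [integral_add hfb (integrable_const _)] at hle
  simp only [integral_const, probReal_univ, smul_eq_mul, one_mul] at hle
  linarith

end Integral

lemma mul_norm_le_integral_abs_inner {Ω E : Type*} [MeasurableSpace Ω] {P : Measure Ω}
    [NormedAddCommGroup E] [InnerProductSpace ℝ E] {W : Ω → E} {η : ℝ}
    (hsep : ∀ u : E, ‖u‖ = 1 → η ≤ ∫ ω, |⟪u, W ω⟫| ∂P) (a : E) :
    η * ‖a‖ ≤ ∫ ω, |⟪a, W ω⟫| ∂P := by
  rcases eq_or_ne a 0 with rfl | ha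
  · simp
  have hna : 0 < ‖a‖ := norm_pos_iff.mpr ha
  set u : E := ‖a‖⁻¹ • a
  have hu : ‖u‖ = 1 := norm_smul_inv_norm ha
  have habs : ∫ ω, |⟪a, W ω⟫| ∂P = ‖a‖ * ∫ ω, |⟪u, W ω⟫| ∂P := by
    rw [← integral_const_mul]
    congr 1 with ω
    rw [real_inner_smul_left, abs_mul, abs_inv, abs_norm, mul_inv_cancel_left₀ hna.ne']
  rw [habs, mul_comm]
  exact mul_le_mul_of_nonneg_left (hsep u hu) hna.le

theorem expectation_abs_inner_add_ge_of_mean_zero_general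
    (q : ℕ) {Ω : Type*} [MeasurableSpace Ω]
    (P : Measure Ω) [IsProbabilityMeasure P]
    (W : Ω → EuclideanSpace ℝ (Fin q))
    (hWint : Integrable W P)
    (μ : EuclideanSpace ℝ (Fin q)) (hμ : μ = ∫ ω, W ω ∂P)
    (hμ0 : μ = 0)
    (η : ℝ)
    (hsep : ∀ u : EuclideanSpace ℝ (Fin q), ‖u‖ = 1 → η ≤ ∫ ω, |⟪u, W ω - μ⟫| ∂P) :
    ∀ (a : EuclideanSpace ℝ (Fin q)) (b : ℝ),
      min (η / 2) 1 * max ‖a‖ |b| ≤ ∫ ω, |⟪a, W ω⟫ + b| ∂P := by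
  intro a b
  subst hμ0
  have hint : Integrable (fun ω => ⟪a, W ω⟫) P := hWint.const_inner a
  have hmean : ∫ ω, ⟪a, W ω⟫ ∂P = 0 := by rw [integral_inner hWint, ← hμ, inner_zero_right]
  have hsep₀ : ∀ u : EuclideanSpace ℝ (Fin q), ‖u‖ = 1 → η ≤ ∫ ω, |⟪u, W ω⟫| ∂P := by
    simpa using hsep
  refine min_half_one_mul_max_le (abs_nonneg b)
    (abs_le_integral_abs_add_of_integral_eq_zero hint hmean b) ?_
  linarith [mul_norm_le_integral_abs_inner hsep₀ a, integral_abs_sub_abs_le_integral_abs_add hint b]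

/-- Let `W : Ω → ℝ^q` be integrable with mean `μ = 0`, and suppose
`E|⟨u, W − μ⟩| ≥ η > 0` for every unit vector `u`.  Then
`E|⟨a, W⟩ + b| ≥ min(η/2, 1) · max(‖a‖, |b|)` for all `a ∈ ℝ^q`, `b ∈ ℝ`. -/
theorem expectation_abs_inner_add_ge_of_mean_zero
    (q : ℕ) (hq : 1 ≤ q) {Ω : Type*} [MeasurableSpace Ω]
    (P : Measure Ω) [IsProbabilityMeasure P]
    (W : Ω → EuclideanSpace ℝ (Fin q)) (hWmeas : Measurable W)
    (hWint : Integrable W P)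
    (μ : EuclideanSpace ℝ (Fin q)) (hμ : μ = ∫ ω, W ω ∂P)
    (hμ0 : μ = 0)
    (η : ℝ) (hη : 0 < η)
    (hsep : ∀ u : EuclideanSpace ℝ (Fin q), ‖u‖ = 1 → η ≤ ∫ ω, |⟪u, W ω - μ⟫| ∂P) :
    ∀ (a : EuclideanSpace ℝ (Fin q)) (b : ℝ),
      min (η / 2) 1 * max ‖a‖ |b| ≤ ∫ ω, |⟪a, W ω⟫ + b| ∂P :=
  expectation_abs_inner_add_ge_of_mean_zero_general q P W hWint μ hμ hμ0 η hsep
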